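/- Let n = 2^r − 1 with r ≥ 3, let C ⊆ F_2^n be a perfect binary code, let i be a coordinate, let I and I' be the sets of i-even and i-odd codewords of C, let I_1 be the set of vectors of F_2^n at Hamming distance exactly 1 from I ∪ (I + e_i), and let I'_1 be the set of vectors at distance exactly 1 from I' ∪ (I' + e_i). Then the six sets I, I + e_i, I_1, I'_1, I' + e_i, I' partition F_2^n and form a perfect 6-coloring of the Hamming graph H(n,2) in which: each vertex of I has 1 neighbor in I + e_i and n−1 neighbors in I_1; each vertex of I + e_i has 1 neighbor in I and n−1 in I_1; each vertex of I_1 has 1 neighbor in I, 1 in I + e_i, 1 in I_1 and n−3 in I'_1; each vertex of I'_1 has n−3 neighbors in I_1, 1 in I'_1, 1 in I' + e_i and 1 in I'; each vertex of I' + e_i has n−1 neighbors in I'_1 and 1 in I'; each vertex of I' has n−1 neighbors in I'_1 and 1 in I' + e_i; all other adjacency counts are 0. -/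

import Mathlib

/-- `C` is a perfect binary single-error-correcting code: every vector is at
Hamming distance at most 1 from exactly one codeword. -/
def IsPerfectCode (n : ℕ) (C : Set (Fin n → ZMod 2)) : Prop :=
  ∀ v : Fin n → ZMod 2, ∃! c, c ∈ C ∧ hammingDist v c ≤ 1

/-- `x` is `i`-even: either `wt x` is odd and `x i = 1`, or `wt x` is even and
`x i = 0`. -/
def IEven (n : ℕ) (i : Fin n) (x : Fin n → ZMod 2) : Prop :=
  (Odd (hammingNorm x) ∧ x i = 1) ∨ (Even (hammingNorm x) ∧ x i = 0)

/-- The unit vector `e i`. -/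
def unitVec (n : ℕ) (i : Fin n) : Fin n → ZMod 2 := Pi.single i 1

/-- The set of vectors at Hamming distance exactly 1 from the set `S`. -/
def DistOne (n : ℕ) (S : Set (Fin n → ZMod 2)) : Set (Fin n → ZMod 2) :=
  {v | v ∉ S ∧ ∃ c ∈ S, hammingDist v c = 1}

/-!
Let `p x = ∑_{k ≠ i} x k` in `ZMod 2`. Then `x` is `i`-even iff `p x = 0`, and `p (x + e m)` is
`p x` for `m = i` and `p x + 1` otherwise. Since `C` is perfect, every vector is a codeword `c`, a
shift `c + e i`, or `c + e j` with `j ≠ i`, for a unique codeword `c`; colouring it by this type and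
by `p c` gives exactly the six sets of the theorem. The colours of the neighbours `v + e m` follow an
explicit rule in `m`. The only non-trivial case is `v = c + e j` with `j ≠ i`: writing
`v + e i = c' + e l`, the coordinates `j`, `i`, `l` are pairwise distinct and lead to `c`, to
`v + e i` and to `c' + e i`, while each of the other `n - 3` coordinates leads to a vector `c'' + e q`
with `c''` of parity opposite to `c`.
-/

namespace PerfectCode

open Finset

variable {n : ℕ}

lemma zmod_two_cases (z : ZMod 2) : z = 0 ∨ z = 1 := by
  revert z; decide

lemma add_unitVec_add_unitVec (v : Fin n → ZMod 2) (m : Fin n) :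
    v + unitVec n m + unitVec n m = v := by
  ext k
  simp [add_assoc, CharTwo.add_self_eq_zero]

lemma add_unitVec_injective (v : Fin n → ZMod 2) :
    Function.Injective fun m => v + unitVec n m := by
  intro m l h
  simpa [unitVec, Pi.single_apply] using congrFun h m

lemma hammingDist_add_unitVec (v : Fin n → ZMod 2) (m : Fin n) :
    hammingDist v (v + unitVec n m) = 1 := by
  simp [hammingDist, unitVec, Pi.single_apply, Finset.filter_eq']

lemma hammingDist_eq_one_iff {v w : Fin n → ZMod 2} :
    hammingDist v w = 1 ↔ ∃ m, w = v + unitVec n m := by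
  refine ⟨fun h => ?_, fun ⟨m, hm⟩ => hm ▸ hammingDist_add_unitVec v m⟩
  obtain ⟨m, hm⟩ := Finset.card_eq_one.mp h
  refine ⟨m, funext fun k => ?_⟩
  have hk : v k ≠ w k ↔ k = m := by simpa using Finset.ext_iff.mp hm k
  by_cases hkm : k = m
  · subst hkm
    have hne := hk.mpr rfl
    simp only [Pi.add_apply, unitVec, Pi.single_eq_same]
    revert hne; generalize v k = a; generalize w k = b; revert a b; decide
  · simpa [unitVec, hkm] using (not_not.mp (mt hk.mp hkm)).symm

def iParity (i : Fin n) (x : Fin n → ZMod 2) : ZMod 2 := ∑ k ∈ univ.erase i, x k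

lemma natCast_hammingNorm {ι : Type*} [Fintype ι] (x : ι → ZMod 2) :
    (hammingNorm x : ZMod 2) = ∑ k, x k := by
  rw [hammingNorm, Finset.natCast_card_filter]
  refine Finset.sum_congr rfl fun k _ => ?_
  rcases zmod_two_cases (x k) with h | h <;> simp [h]

lemma iEven_iff_iParity_eq_zero (i : Fin n) (x : Fin n → ZMod 2) :
    IEven n i x ↔ iParity i x = 0 := by
  have hsum : iParity i x = (hammingNorm x : ZMod 2) + x i := by
    rw [natCast_hammingNorm, ← Finset.add_sum_erase _ _ (mem_univ i), iParity,
      add_right_comm, CharTwo.add_self_eq_zero, zero_add]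
  rw [IEven, hsum, ← ZMod.natCast_eq_one_iff_odd, ← ZMod.natCast_eq_zero_iff_even]
  generalize (hammingNorm x : ZMod 2) = a
  generalize x i = b
  revert a b; decide

lemma not_iEven_iff_iParity_eq_one (i : Fin n) (x : Fin n → ZMod 2) :
    ¬ IEven n i x ↔ iParity i x = 1 := by
  rw [iEven_iff_iParity_eq_zero]
  rcases zmod_two_cases (iParity i x) with h | h <;> simp [h]

lemma iParity_add_unitVec (i m : Fin n) (v : Fin n → ZMod 2) :
    iParity i (v + unitVec n m) = iParity i v + if m = i then 0 else 1 := by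
  simp [iParity, Finset.sum_add_distrib, unitVec, Finset.sum_pi_single']

section Code

variable {C : Set (Fin n → ZMod 2)} (hC : IsPerfectCode n C)
include hC

lemma add_unitVec_notMem {v : Fin n → ZMod 2} (hv : v ∈ C) (m : Fin n) :
    v + unitVec n m ∉ C := by
  intro hvm
  have h := (hC v).unique ⟨hvm, (hammingDist_add_unitVec v m).le⟩ ⟨hv, by simp⟩
  simpa [unitVec] using congrFun h m

lemma eq_of_add_unitVec_mem {v : Fin n → ZMod 2} {m l : Fin n} (hm : v + unitVec n m ∈ C)
    (hl : v + unitVec n l ∈ C) : m = l :=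
  add_unitVec_injective v <| (hC v).unique ⟨hm, (hammingDist_add_unitVec v m).le⟩
    ⟨hl, (hammingDist_add_unitVec v l).le⟩

lemma exists_add_unitVec_mem {v : Fin n → ZMod 2} (hv : v ∉ C) :
    ∃ m, v + unitVec n m ∈ C := by
  obtain ⟨c, ⟨hc, hvc⟩, -⟩ := hC v
  have hvc' : hammingDist v c ≠ 0 := fun h => hv (eq_of_hammingDist_eq_zero h ▸ hc)
  obtain ⟨m, rfl⟩ := hammingDist_eq_one_iff.mp (show hammingDist v c = 1 by omega)
  exact ⟨m, hc⟩

end Code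

/-- The colour, numbered as in the theorem, of the vectors of kind `t` (`0`: codewords, `1`:
codewords shifted by `e i`, `2`: all other vectors) whose nearest codeword has `iParity` `a`. -/
def classIndex (a : ZMod 2) (t : Fin 3) : Fin 6 := if a = 0 then ![0, 1, 2] t else ![5, 4, 3] t

lemma classIndex_inj {a b : ZMod 2} {t s : Fin 3} :
    classIndex a t = classIndex b s ↔ a = b ∧ t = s := by
  revert a b t s; decide

open Classical in
noncomputable def color (C : Set (Fin n → ZMod 2)) (i : Fin n) (v : Fin n → ZMod 2) : Fin 6 :=
  if v ∈ C then classIndex (iParity i v) 0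
  else if v + unitVec n i ∈ C then classIndex (iParity i v) 1
  -- otherwise `v = c + e j` with `c ∈ C` and `j ≠ i`, so `iParity i c = iParity i v + 1`
  else classIndex (iParity i v + 1) 2

section Color

variable {C : Set (Fin n → ZMod 2)} {i : Fin n} {v : Fin n → ZMod 2} {a : ZMod 2}

lemma color_eq_classIndex_zero : color C i v = classIndex a 0 ↔ v ∈ C ∧ iParity i v = a := by
  unfold color; split_ifs <;> simp [classIndex_inj, *]

lemma color_eq_classIndex_one (hC : IsPerfectCode n C) :
    color C i v = classIndex a 1 ↔ v + unitVec n i ∈ C ∧ iParity i v = a := by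
  have hv : v + unitVec n i ∈ C → v ∉ C := fun h hv => add_unitVec_notMem hC hv i h
  unfold color; split_ifs <;> simp_all [classIndex_inj]

lemma color_eq_classIndex_two :
    color C i v = classIndex a 2 ↔ v ∉ C ∧ v + unitVec n i ∉ C ∧ iParity i v + 1 = a := by
  unfold color; split_ifs <;> simp [classIndex_inj, *]

end Color

lemma image_add_unitVec (S : Set (Fin n → ZMod 2)) (m : Fin n) :
    (fun x => x + unitVec n m) '' S = {v | v + unitVec n m ∈ S} :=
  congrFun (Set.image_eq_preimage_of_inverse (add_unitVec_add_unitVec · m)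
    (add_unitVec_add_unitVec · m)) S

section Classes

variable {C : Set (Fin n → ZMod 2)} (hC : IsPerfectCode n C) (i : Fin n) (a : ZMod 2)

omit hC in
lemma setOf_color_eq_classIndex_zero :
    {v | color C i v = classIndex a 0} = {x ∈ C | iParity i x = a} :=
  Set.ext fun _ => color_eq_classIndex_zero

include hC

lemma setOf_color_eq_classIndex_one :
    {v | color C i v = classIndex a 1} =
      (fun x => x + unitVec n i) '' {x ∈ C | iParity i x = a} := by
  rw [image_add_unitVec]
  ext v
  simp [color_eq_classIndex_one hC, iParity_add_unitVec]

lemma setOf_color_eq_classIndex_two :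
    {v | color C i v = classIndex a 2} =
      DistOne n ({x ∈ C | iParity i x = a} ∪
        (fun x => x + unitVec n i) '' {x ∈ C | iParity i x = a}) := by
  rw [image_add_unitVec]
  ext v
  simp only [DistOne, color_eq_classIndex_two, Set.mem_ofPred_eq, Set.mem_union]
  constructor
  · rintro ⟨hv, hvi, rfl⟩
    obtain ⟨j, hj⟩ := exists_add_unitVec_mem hC hv
    have hji : j ≠ i := by rintro rfl; exact hvi hj
    refine ⟨by tauto, v + unitVec n j, Or.inl ⟨hj, by simp [iParity_add_unitVec, hji]⟩,
      hammingDist_add_unitVec v j⟩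
  · rintro ⟨hvS, u, hu, hvu⟩
    obtain ⟨m, rfl⟩ := hammingDist_eq_one_iff.mp hvu
    have hmi : m ≠ i := by
      rintro rfl
      rw [add_unitVec_add_unitVec] at hu
      tauto
    rcases hu with ⟨hu, rfl⟩ | ⟨hu, rfl⟩
    · refine ⟨?_, fun hvi => hmi (eq_of_add_unitVec_mem hC hu hvi), ?_⟩
      · simpa [add_unitVec_add_unitVec] using add_unitVec_notMem hC hu m
      · simp [iParity_add_unitVec, hmi]
    · refine ⟨fun hv => hmi (eq_of_add_unitVec_mem hC (by rwa [add_unitVec_add_unitVec]) hu),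
        fun hvi => ?_, ?_⟩
      · exact add_unitVec_notMem hC hu m (by rwa [add_right_comm, add_unitVec_add_unitVec])
      · simp [iParity_add_unitVec, hmi]

end Classes

section Neighbours

variable {C : Set (Fin n → ZMod 2)} (hC : IsPerfectCode n C) {i : Fin n} {v : Fin n → ZMod 2}
include hC

lemma color_add_unitVec_of_mem (hv : v ∈ C) (m : Fin n) :
    color C i (v + unitVec n m) =
      if m = i then classIndex (iParity i v) 1 else classIndex (iParity i v) 2 := by
  split_ifs with hmi
  · subst hmi
    exact (color_eq_classIndex_one hC).mpr
      ⟨by rwa [add_unitVec_add_unitVec], by simp [iParity_add_unitVec]⟩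
  · refine color_eq_classIndex_two.mpr ⟨add_unitVec_notMem hC hv m, fun h => hmi ?_, ?_⟩
    · exact eq_of_add_unitVec_mem hC (by rwa [add_unitVec_add_unitVec]) h
    · simp [iParity_add_unitVec, hmi, add_assoc, CharTwo.add_self_eq_zero]

lemma color_add_unitVec_of_add_mem (hvi : v + unitVec n i ∈ C) (m : Fin n) :
    color C i (v + unitVec n m) =
      if m = i then classIndex (iParity i v) 0 else classIndex (iParity i v) 2 := by
  split_ifs with hmi
  · subst hmi
    exact color_eq_classIndex_zero.mpr ⟨hvi, by simp [iParity_add_unitVec]⟩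
  · refine color_eq_classIndex_two.mpr ⟨fun h => hmi (eq_of_add_unitVec_mem hC h hvi),
      fun h => add_unitVec_notMem hC hvi m ?_,
      by simp [iParity_add_unitVec, hmi, add_assoc, CharTwo.add_self_eq_zero]⟩
    rwa [add_right_comm]

lemma color_add_unitVec_of_notMem {j l : Fin n} (hv : v ∉ C) (hvi : v + unitVec n i ∉ C)
    (hj : v + unitVec n j ∈ C) (hl : v + unitVec n i + unitVec n l ∈ C) (m : Fin n) :
    color C i (v + unitVec n m) =
      if m = j then classIndex (iParity i v + 1) 0
      else if m = i then classIndex (iParity i v + 1) 2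
      else if m = l then classIndex (iParity i v + 1) 1
      else classIndex (iParity i v) 2 := by
  have hji : j ≠ i := by rintro rfl; exact hvi hj
  have hli : l ≠ i := by rintro rfl; rw [add_unitVec_add_unitVec] at hl; exact hv hl
  split_ifs with hmj hmi hml
  · subst hmj
    exact color_eq_classIndex_zero.mpr ⟨hj, by simp [iParity_add_unitVec, hji]⟩
  · subst hmi
    exact color_eq_classIndex_two.mpr
      ⟨hvi, by rwa [add_unitVec_add_unitVec], by simp [iParity_add_unitVec]⟩
  · subst hml
    exact (color_eq_classIndex_one hC).mpr
      ⟨by rwa [add_right_comm], by simp [iParity_add_unitVec, hli]⟩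
  · refine color_eq_classIndex_two.mpr ⟨fun h => hmj (eq_of_add_unitVec_mem hC h hj),
      fun h => hml (eq_of_add_unitVec_mem hC (by rwa [add_right_comm]) hl), ?_⟩
    simp [iParity_add_unitVec, hmi, add_assoc, CharTwo.add_self_eq_zero]

end Neighbours

lemma card_filter_ite_eq {ι α : Type*} [DecidableEq ι] [DecidableEq α] (s : Finset ι) (j : ι)
    (x k : α) (g : ι → α) :
    #{m ∈ s | (if m = j then x else g m) = k} =
      (if j ∈ s ∧ x = k then 1 else 0) + #{m ∈ s.erase j | g m = k} := by
  simp only [Finset.card_filter]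
  by_cases hj : j ∈ s
  · rw [← Finset.add_sum_erase s _ hj]
    congr 1
    · simp [hj]
    · exact Finset.sum_congr rfl fun m hm => by rw [if_neg (Finset.ne_of_mem_erase hm)]
  · rw [Finset.erase_eq_of_notMem hj, if_neg (by tauto), zero_add]
    exact Finset.sum_congr rfl fun m hm => by rw [if_neg (show m ≠ j by rintro rfl; exact hj hm)]

lemma ncard_hammingDist_eq_one (v : Fin n → ZMod 2) (P : (Fin n → ZMod 2) → Prop)
    [DecidablePred P] :
    {w | hammingDist v w = 1 ∧ P w}.ncard = #{m | P (v + unitVec n m)} := by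
  have h : {w | hammingDist v w = 1 ∧ P w} =
      (fun m => v + unitVec n m) '' ↑({m | P (v + unitVec n m)} : Finset (Fin n)) := by
    ext w
    simp only [hammingDist_eq_one_iff]
    aesop
  rw [h, Set.ncard_image_of_injective _ (add_unitVec_injective v), Set.ncard_coe_finset]

def adjCounts (n : ℕ) : Fin 6 → Fin 6 → ℕ :=
  ![![0, 1, n - 1, 0, 0, 0],
    ![1, 0, n - 1, 0, 0, 0],
    ![1, 1, 1, n - 3, 0, 0],
    ![0, 0, n - 3, 1, 1, 1],
    ![0, 0, 0, n - 1, 0, 1],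
    ![0, 0, 0, n - 1, 1, 0]]

lemma ncard_hammingDist_eq_one_color {C : Set (Fin n → ZMod 2)} (hC : IsPerfectCode n C)
    (i : Fin n) (v : Fin n → ZMod 2) (k : Fin 6) :
    {w | hammingDist v w = 1 ∧ color C i w = k}.ncard = adjCounts n (color C i v) k := by
  rw [ncard_hammingDist_eq_one]
  by_cases hv : v ∈ C
  · rw [color_eq_classIndex_zero.mpr ⟨hv, rfl⟩]
    simp only [color_add_unitVec_of_mem hC hv, card_filter_ite_eq, Finset.filter_const]
    rcases zmod_two_cases (iParity i v) with h | h <;> fin_cases k <;>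
      simp [h, classIndex, adjCounts]
  by_cases hvi : v + unitVec n i ∈ C
  · rw [(color_eq_classIndex_one hC).mpr ⟨hvi, rfl⟩]
    simp only [color_add_unitVec_of_add_mem hC hvi, card_filter_ite_eq, Finset.filter_const]
    rcases zmod_two_cases (iParity i v) with h | h <;> fin_cases k <;>
      simp [h, classIndex, adjCounts]
  obtain ⟨j, hj⟩ := exists_add_unitVec_mem hC hv
  obtain ⟨l, hl⟩ := exists_add_unitVec_mem hC hvi
  have hji : j ≠ i := by rintro rfl; exact hvi hj
  have hli : l ≠ i := by rintro rfl; rw [add_unitVec_add_unitVec] at hl; exact hv hl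
  have hjl : j ≠ l := by rintro rfl; exact add_unitVec_notMem hC hj i (by rwa [add_right_comm])
  rw [color_eq_classIndex_two.mpr ⟨hv, hvi, rfl⟩]
  simp only [color_add_unitVec_of_notMem hC hv hvi hj hl, card_filter_ite_eq, Finset.filter_const]
  rcases zmod_two_cases (iParity i v) with h | h <;> fin_cases k <;>
    simp [h, classIndex, adjCounts, hji.symm, hli, hjl.symm, Nat.sub_sub,
      (by decide : (1 : ZMod 2) + 1 = 0)]

end PerfectCode

open PerfectCode in
theorem stmt_14_general (n : ℕ)
    (C : Set (Fin n → ZMod 2)) (hC : IsPerfectCode n C) (i : Fin n)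
    (I I' I1 I1' : Set (Fin n → ZMod 2))
    (hI : I = {x ∈ C | IEven n i x}) (hI' : I' = {x ∈ C | ¬ IEven n i x})
    (hI1 : I1 = DistOne n (I ∪ (fun x => x + unitVec n i) '' I))
    (hI1' : I1' = DistOne n (I' ∪ (fun x => x + unitVec n i) '' I')) :
    (∀ j k : Fin 6, j ≠ k →
      Disjoint (![I, (fun x => x + unitVec n i) '' I, I1, I1',
          (fun x => x + unitVec n i) '' I', I'] j)
        (![I, (fun x => x + unitVec n i) '' I, I1, I1',
          (fun x => x + unitVec n i) '' I', I'] k)) ∧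
    (⋃ j : Fin 6, ![I, (fun x => x + unitVec n i) '' I, I1, I1',
        (fun x => x + unitVec n i) '' I', I'] j) = Set.univ ∧
    (∀ j : Fin 6, ∀ v ∈ ![I, (fun x => x + unitVec n i) '' I, I1, I1',
        (fun x => x + unitVec n i) '' I', I'] j, ∀ k : Fin 6,
      {w | hammingDist v w = 1 ∧
          w ∈ ![I, (fun x => x + unitVec n i) '' I, I1, I1',
            (fun x => x + unitVec n i) '' I', I'] k}.ncard =
        ![![0, 1, n - 1, 0, 0, 0],
          ![1, 0, n - 1, 0, 0, 0],
          ![1, 1, 1, n - 3, 0, 0],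
          ![0, 0, n - 3, 1, 1, 1],
          ![0, 0, 0, n - 1, 0, 1],
          ![0, 0, 0, n - 1, 1, 0]] j k) := by
  have hclasses : ![I, (fun x => x + unitVec n i) '' I, I1, I1',
      (fun x => x + unitVec n i) '' I', I'] = fun k => {v | color C i v = k} := by
    simp only [not_iEven_iff_iParity_eq_one] at hI'
    simp only [iEven_iff_iParity_eq_zero] at hI
    subst hI hI' hI1 hI1'
    funext k
    fin_cases k
    · exact (setOf_color_eq_classIndex_zero i 0).symm
    · exact (setOf_color_eq_classIndex_one hC i 0).symm
    · exact (setOf_color_eq_classIndex_two hC i 0).symm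
    · exact (setOf_color_eq_classIndex_two hC i 1).symm
    · exact (setOf_color_eq_classIndex_one hC i 1).symm
    · exact (setOf_color_eq_classIndex_zero i 1).symm
  rw [hclasses]
  refine ⟨fun j k hjk => Set.disjoint_left.mpr fun v hj hk => hjk (hj.symm.trans hk),
    Set.eq_univ_of_forall fun v => Set.mem_iUnion.mpr ⟨_, rfl⟩, fun j v hv k => ?_⟩
  rw [← hv]
  exact ncard_hammingDist_eq_one_color hC i v k

theorem stmt_14 (r n : ℕ) (hr : 3 ≤ r) (hn : n = 2 ^ r - 1)
    (C : Set (Fin n → ZMod 2)) (hC : IsPerfectCode n C) (i : Fin n)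
    (I I' I1 I1' : Set (Fin n → ZMod 2))
    (hI : I = {x ∈ C | IEven n i x}) (hI' : I' = {x ∈ C | ¬ IEven n i x})
    (hI1 : I1 = DistOne n (I ∪ (fun x => x + unitVec n i) '' I))
    (hI1' : I1' = DistOne n (I' ∪ (fun x => x + unitVec n i) '' I')) :
    (∀ j k : Fin 6, j ≠ k →
      Disjoint (![I, (fun x => x + unitVec n i) '' I, I1, I1',
          (fun x => x + unitVec n i) '' I', I'] j)
        (![I, (fun x => x + unitVec n i) '' I, I1, I1',
          (fun x => x + unitVec n i) '' I', I'] k)) ∧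
    (⋃ j : Fin 6, ![I, (fun x => x + unitVec n i) '' I, I1, I1',
        (fun x => x + unitVec n i) '' I', I'] j) = Set.univ ∧
    (∀ j : Fin 6, ∀ v ∈ ![I, (fun x => x + unitVec n i) '' I, I1, I1',
        (fun x => x + unitVec n i) '' I', I'] j, ∀ k : Fin 6,
      {w | hammingDist v w = 1 ∧
          w ∈ ![I, (fun x => x + unitVec n i) '' I, I1, I1',
            (fun x => x + unitVec n i) '' I', I'] k}.ncard =
        ![![0, 1, n - 1, 0, 0, 0],
          ![1, 0, n - 1, 0, 0, 0],
          ![1, 1, 1, n - 3, 0, 0],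
          ![0, 0, n - 3, 1, 1, 1],
          ![0, 0, 0, n - 1, 0, 1],
          ![0, 0, 0, n - 1, 1, 0]] j k) :=
  stmt_14_general n C hC i I I' I1 I1' hI hI' hI1 hI1'
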